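/- Whole-Program ANF Correctness. If e is a λDS expression well-formed with respect to 0 (closed), and S is an infinite set of λANF variable names, then there exist a 1-hole context C, a result variable x, and a set S′ such that S ⊢ e, [] ⇒ C, x, S′, and e ⊑ C[halt x]: for every value v with [] ⊢ e ⇓ ⟨v⟩, there exists a value v′ with ∅ ⊢ C[halt x] ⇓ ⟨v′⟩ (evaluation from the empty target environment) and v ≈ v′. -/

import Mathlib

/-!
Correctness is a simulation argument by induction on the source evaluation. Source and target
values are related by `SimVal`: constructors field-wise, and a source closure `Clo(ρ, e)` to any
target closure produced by translating `λ.e` in an environment related to `ρ`. The invariant is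
that running the context `C` of a translation `S ⊢ e, x⃗ ⇒ C, r, S′` from a related environment
binds `r` to a value related to the value of `e` and changes no variable outside `S`. The
variables in scope lie outside `S`, and consecutive sub-translations draw from nested,
shrinking pools, so nothing bound earlier is ever overwritten. Every rule consumes finitely many
names, so an infinite pool never runs out and every closed term has a translation.
-/

namespace ANF

abbrev Var := ℕ
abbrev CTag := ℕ

/-! ## Source language λDS (de Bruijn, call-by-value) -/

inductive SExp : Type where
  | var : ℕ → SExp
  | slet : SExp → SExp → SExp
  | lam : SExp → SExp
  | app : SExp → SExp → SExp
  | constr : CTag → List SExp → SExp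
  | smatch : SExp → List (CTag × SExp) → SExp

inductive SVal : Type where
  | constr : CTag → List SVal → SVal
  | clo : List SVal → SExp → SVal

inductive SRes : Type where
  | val : SVal → SRes
  | oot : SRes

-- Fuel-indexed big-step semantics of λDS: one fuel unit per rule application;
-- `OOT` is produced exactly when fuel is exhausted.
mutual
inductive SEval : List SVal → SExp → ℕ → SRes → Prop where
  | oot {ρ e} : SEval ρ e 0 .oot
  | var {ρ n v} : ρ[n]? = some v → SEval ρ (.var n) 1 (.val v)
  | lam {ρ e} : SEval ρ (.lam e) 1 (.val (.clo ρ e))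
  | slet {ρ e1 e2 v1 r f1 f2} :
      SEval ρ e1 f1 (.val v1) → SEval (v1 :: ρ) e2 f2 r →
      SEval ρ (.slet e1 e2) (f1 + f2 + 1) r
  | slet_oot {ρ e1 e2 f1} :
      SEval ρ e1 f1 .oot → SEval ρ (.slet e1 e2) (f1 + 1) .oot
  | app {ρ e1 e2 ρ' eb v2 r f1 f2 f3} :
      SEval ρ e1 f1 (.val (.clo ρ' eb)) →
      SEval ρ e2 f2 (.val v2) →
      SEval (v2 :: ρ') eb f3 r →
      SEval ρ (.app e1 e2) (f1 + f2 + f3 + 1) r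
  | app_oot1 {ρ e1 e2 f1} :
      SEval ρ e1 f1 .oot → SEval ρ (.app e1 e2) (f1 + 1) .oot
  | app_oot2 {ρ e1 e2 v1 f1 f2} :
      SEval ρ e1 f1 (.val v1) → SEval ρ e2 f2 .oot →
      SEval ρ (.app e1 e2) (f1 + f2 + 1) .oot
  | constr {ρ c es vs f} :
      SEvalList ρ es f (some vs) →
      SEval ρ (.constr c es) (f + 1) (.val (.constr c vs))
  | constr_oot {ρ c es f} :
      SEvalList ρ es f none → SEval ρ (.constr c es) (f + 1) .oot
  | smatch {ρ e bs c vs e' r f1 f2} :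
      SEval ρ e f1 (.val (.constr c vs)) →
      bs.lookup c = some e' →
      SEval ρ e' f2 r →
      SEval ρ (.smatch e bs) (f1 + f2 + 1) r
  | smatch_oot {ρ e bs f1} :
      SEval ρ e f1 .oot → SEval ρ (.smatch e bs) (f1 + 1) .oot

inductive SEvalList : List SVal → List SExp → ℕ → Option (List SVal) → Prop where
  | nil {ρ} : SEvalList ρ [] 0 (some [])
  | cons {ρ e es v vs f1 f2} :
      SEval ρ e f1 (.val v) → SEvalList ρ es f2 (some vs) →
      SEvalList ρ (e :: es) (f1 + f2) (some (v :: vs))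
  | cons_oot {ρ e es f1} :
      SEval ρ e f1 .oot → SEvalList ρ (e :: es) f1 none
  | cons_oot2 {ρ e es v f1 f2} :
      SEval ρ e f1 (.val v) → SEvalList ρ es f2 none →
      SEvalList ρ (e :: es) (f1 + f2) none
end

/-- `SWf n e`: all free de Bruijn indices of `e` are below `n`. -/
inductive SWf : ℕ → SExp → Prop where
  | var {n m} : m < n → SWf n (.var m)
  | slet {n e1 e2} : SWf n e1 → SWf (n + 1) e2 → SWf n (.slet e1 e2)
  | lam {n e} : SWf (n + 1) e → SWf n (.lam e)
  | app {n e1 e2} : SWf n e1 → SWf n e2 → SWf n (.app e1 e2)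
  | constr {n c es} : (∀ e ∈ es, SWf n e) → SWf n (.constr c es)
  | smatch {n e bs} : SWf n e → (∀ b ∈ bs, SWf n b.2) → SWf n (.smatch e bs)

/-- Well-formed source values: every closure `Clo(ρ, e)` has `e` well-formed
w.r.t. `|ρ| + 1` and `ρ` well-formed. -/
inductive SValWf : SVal → Prop where
  | constr {c vs} : (∀ v ∈ vs, SValWf v) → SValWf (.constr c vs)
  | clo {ρ e} : (∀ v ∈ ρ, SValWf v) → SWf (ρ.length + 1) e → SValWf (.clo ρ e)

def SEnvWf (ρ : List SVal) : Prop := ∀ v ∈ ρ, SValWf v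

/-! ## Target language λANF (named variables) -/

inductive TExp : Type where
  | constr : Var → CTag → List Var → TExp → TExp    -- let x = C(ys) in e
  | proj : Var → Var → ℕ → TExp → TExp              -- let x = y.i in e
  | fn : Var → List Var → TExp → TExp → TExp        -- fun f xs = e1 in e2
  | call : Var → Var → List Var → TExp → TExp       -- let x = f ys in e
  | ccase : Var → List (CTag × TExp) → TExp         -- case y of [Ci → ei]
  | tailcall : Var → List Var → TExp                -- f xs
  | halt : Var → TExp                               -- halt x

inductive TVal : Type where
  | constr : CTag → List TVal → TVal
  | clo : (Var → Option TVal) → Var → List Var → TExp → TVal  -- Clo(σ, fun f xs = e)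

abbrev TEnv := Var → Option TVal

def upd (σ : TEnv) (x : Var) (v : TVal) : TEnv :=
  fun y => if y = x then some v else σ y

def updList (σ : TEnv) (xs : List Var) (vs : List TVal) : TEnv :=
  (xs.zip vs).foldl (fun σ p => upd σ p.1 p.2) σ

def getList (σ : TEnv) (xs : List Var) : Option (List TVal) := xs.mapM σ

inductive TRes : Type where
  | val : TVal → TRes
  | oot : TRes

/-- Fuel-indexed big-step semantics of λANF: one fuel unit per rule application. -/
inductive TEval : TEnv → TExp → ℕ → TRes → Prop where
  | oot {σ e} : TEval σ e 0 .oot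
  | constr {σ x c ys e vs f r} :
      getList σ ys = some vs →
      TEval (upd σ x (.constr c vs)) e f r →
      TEval σ (.constr x c ys e) (f + 1) r
  | proj {σ x y i e c vs v f r} :
      σ y = some (.constr c vs) → vs[i]? = some v →
      TEval (upd σ x v) e f r →
      TEval σ (.proj x y i e) (f + 1) r
  | fn {σ f xs e1 e2 fu r} :
      TEval (upd σ f (.clo σ f xs e1)) e2 fu r →
      TEval σ (.fn f xs e1 e2) (fu + 1) r
  | call {σ x g ys e σ' g' xs eb vs v f1 f2 r} :
      σ g = some (.clo σ' g' xs eb) →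
      getList σ ys = some vs →
      xs.length = vs.length →
      TEval (updList (upd σ' g' (.clo σ' g' xs eb)) xs vs) eb f1 (.val v) →
      TEval (upd σ x v) e f2 r →
      TEval σ (.call x g ys e) (f1 + f2 + 1) r
  | call_oot {σ x g ys e σ' g' xs eb vs f1} :
      σ g = some (.clo σ' g' xs eb) →
      getList σ ys = some vs →
      xs.length = vs.length →
      TEval (updList (upd σ' g' (.clo σ' g' xs eb)) xs vs) eb f1 .oot →
      TEval σ (.call x g ys e) (f1 + 1) .oot
  | ccase {σ y bs c vs e' f r} :
      σ y = some (.constr c vs) →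
      bs.lookup c = some e' →
      TEval σ e' f r →
      TEval σ (.ccase y bs) (f + 1) r
  | tailcall {σ g ys σ' g' xs eb vs f r} :
      σ g = some (.clo σ' g' xs eb) →
      getList σ ys = some vs →
      xs.length = vs.length →
      TEval (updList (upd σ' g' (.clo σ' g' xs eb)) xs vs) eb f r →
      TEval σ (.tailcall g ys) (f + 1) r
  | halt {σ x v} :
      σ x = some v → TEval σ (.halt x) 1 (.val v)

/-! ## 1-hole contexts (hole in tail position) -/

inductive Ctx : Type where
  | hole : Ctx
  | constr : Var → CTag → List Var → Ctx → Ctx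
  | proj : Var → Var → ℕ → Ctx → Ctx
  | call : Var → Var → List Var → Ctx → Ctx
  | fn : Var → List Var → TExp → Ctx → Ctx

def Ctx.plug : Ctx → TExp → TExp
  | .hole, e => e
  | .constr x c ys C, e => .constr x c ys (C.plug e)
  | .proj x y i C, e => .proj x y i (C.plug e)
  | .call x g ys C, e => .call x g ys (C.plug e)
  | .fn f xs eb C, e => .fn f xs eb (C.plug e)

def Ctx.comp : Ctx → Ctx → Ctx
  | .hole, D => D
  | .constr x c ys C, D => .constr x c ys (C.comp D)
  | .proj x y i C, D => .proj x y i (C.comp D)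
  | .call x g ys C, D => .call x g ys (C.comp D)
  | .fn f xs eb C, D => .fn f xs eb (C.comp D)

/-! ## Free and bound variables of λANF expressions and contexts -/

inductive TExp.FV : TExp → Var → Prop where
  | constr_arg {x c ys e y} : y ∈ ys → TExp.FV (.constr x c ys e) y
  | constr_cont {x c ys e z} : TExp.FV e z → z ≠ x → TExp.FV (.constr x c ys e) z
  | proj_scrut {x y i e} : TExp.FV (.proj x y i e) y
  | proj_cont {x y i e z} : TExp.FV e z → z ≠ x → TExp.FV (.proj x y i e) z
  | fn_body {f xs e1 e2 z} : TExp.FV e1 z → z ≠ f → z ∉ xs → TExp.FV (.fn f xs e1 e2) z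
  | fn_cont {f xs e1 e2 z} : TExp.FV e2 z → z ≠ f → TExp.FV (.fn f xs e1 e2) z
  | call_fn {x g ys e} : TExp.FV (.call x g ys e) g
  | call_arg {x g ys e y} : y ∈ ys → TExp.FV (.call x g ys e) y
  | call_cont {x g ys e z} : TExp.FV e z → z ≠ x → TExp.FV (.call x g ys e) z
  | ccase_scrut {y bs} : TExp.FV (.ccase y bs) y
  | ccase_branch {y bs c e' z} : (c, e') ∈ bs → TExp.FV e' z → TExp.FV (.ccase y bs) z
  | tailcall_fn {g ys} : TExp.FV (.tailcall g ys) g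
  | tailcall_arg {g ys y} : y ∈ ys → TExp.FV (.tailcall g ys) y
  | halt {x} : TExp.FV (.halt x) x

/-- Variables bound somewhere inside a λANF expression. -/
inductive TExp.BV : TExp → Var → Prop where
  | constr_bind {x c ys e} : TExp.BV (.constr x c ys e) x
  | constr_cont {x c ys e z} : TExp.BV e z → TExp.BV (.constr x c ys e) z
  | proj_bind {x y i e} : TExp.BV (.proj x y i e) x
  | proj_cont {x y i e z} : TExp.BV e z → TExp.BV (.proj x y i e) z
  | fn_name {f xs e1 e2} : TExp.BV (.fn f xs e1 e2) f
  | fn_param {f xs e1 e2 x} : x ∈ xs → TExp.BV (.fn f xs e1 e2) x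
  | fn_body {f xs e1 e2 z} : TExp.BV e1 z → TExp.BV (.fn f xs e1 e2) z
  | fn_cont {f xs e1 e2 z} : TExp.BV e2 z → TExp.BV (.fn f xs e1 e2) z
  | call_bind {x g ys e} : TExp.BV (.call x g ys e) x
  | call_cont {x g ys e z} : TExp.BV e z → TExp.BV (.call x g ys e) z
  | ccase_branch {y bs c e' z} : (c, e') ∈ bs → TExp.BV e' z → TExp.BV (.ccase y bs) z

/-- Variables bound by a 1-hole context (including variables bound inside the
bodies of functions hanging off it). -/
inductive Ctx.BV : Ctx → Var → Prop where
  | constr_bind {x c ys C} : Ctx.BV (.constr x c ys C) x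
  | constr_cont {x c ys C z} : Ctx.BV C z → Ctx.BV (.constr x c ys C) z
  | proj_bind {x y i C} : Ctx.BV (.proj x y i C) x
  | proj_cont {x y i C z} : Ctx.BV C z → Ctx.BV (.proj x y i C) z
  | call_bind {x g ys C} : Ctx.BV (.call x g ys C) x
  | call_cont {x g ys C z} : Ctx.BV C z → Ctx.BV (.call x g ys C) z
  | fn_name {f xs eb C} : Ctx.BV (.fn f xs eb C) f
  | fn_param {f xs eb C x} : x ∈ xs → Ctx.BV (.fn f xs eb C) x
  | fn_body {f xs eb C z} : TExp.BV eb z → Ctx.BV (.fn f xs eb C) z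
  | fn_cont {f xs eb C z} : Ctx.BV C z → Ctx.BV (.fn f xs eb C) z

/-! ## Step-indexed logical relation on λANF -/

/-- Result relation relative to a value relation. -/
def ResRelOf (V : TVal → TVal → Prop) : TRes → TRes → Prop
  | .oot, .oot => True
  | .val v1, .val v2 => V v1 v2
  | _, _ => False

/-- Expression (configuration) relation relative to a value relation. -/
def ExpRelOf (V : TVal → TVal → Prop) (σ1 : TEnv) (e1 : TExp) (σ2 : TEnv) (e2 : TExp) : Prop :=
  ∀ f1 r1, TEval σ1 e1 f1 r1 →
    ∃ f2 r2, TEval σ2 e2 f2 r2 ∧ ResRelOf V r1 r2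

/-- Value relation at index `k`, given the relation at all smaller indices. -/
inductive ValRelAux (k : ℕ) (rec : (i : ℕ) → i < k → TVal → TVal → Prop) :
    TVal → TVal → Prop where
  | constr {c vs1 vs2} :
      vs1.length = vs2.length →
      (∀ (j : ℕ) v1 v2, vs1[j]? = some v1 → vs2[j]? = some v2 → ValRelAux k rec v1 v2) →
      ValRelAux k rec (.constr c vs1) (.constr c vs2)
  | clo {σ1 σ2 : TEnv} {f g : Var} {xs ys : List Var} {e1 e2 : TExp} :
      (∀ i (h : i < k) (vs1 vs2 : List TVal),
        vs1.length = vs2.length →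
        (∀ (j : ℕ) v1 v2, vs1[j]? = some v1 → vs2[j]? = some v2 → rec i h v1 v2) →
        xs.length = vs1.length →
        ys.length = vs2.length ∧
        ExpRelOf (rec i h)
          (updList (upd σ1 f (.clo σ1 f xs e1)) xs vs1) e1
          (updList (upd σ2 g (.clo σ2 g ys e2)) ys vs2) e2) →
      ValRelAux k rec (.clo σ1 f xs e1) (.clo σ2 g ys e2)

/-- Step-indexed value relation `v1 ≼k v2`. -/
def ValRel (k : ℕ) : TVal → TVal → Prop :=
  ValRelAux k (fun i h => ValRel i)
termination_by k
decreasing_by exact h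

/-- Step-indexed result relation `r1 ≼k r2`. -/
def ResRel (k : ℕ) : TRes → TRes → Prop := ResRelOf (ValRel k)

/-- Step-indexed expression relation `(σ1, e1) ⪅k (σ2, e2)`. -/
def ExpRel (k : ℕ) : TEnv → TExp → TEnv → TExp → Prop := ExpRelOf (ValRel k)

/-! ## The relational ANF transformation -/

-- `AnfRel S e xs C r S'` is the relational ANF transformation `S ⊢ e, x⃗ ⇒ C, r, S′`.
mutual
inductive AnfRel : Set Var → SExp → List Var → Ctx → Var → Set Var → Prop where
  | var {S n xs y} :
      xs[n]? = some y →
      AnfRel S (.var n) xs .hole y S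
  | lam {S S' e xs x1 f C1 r1} :
      x1 ∈ S → f ∈ S \ {x1} →
      AnfRel (S \ {x1, f}) e (x1 :: xs) C1 r1 S' →
      AnfRel S (.lam e) xs (.fn f [x1] (C1.plug (.halt r1)) .hole) f S'
  | app {S1 S2 S3 e1 e2 xs C1 C2 x1 x2 r} :
      AnfRel S1 e1 xs C1 x1 S2 →
      AnfRel S2 e2 xs C2 x2 S3 →
      r ∈ S3 →
      AnfRel S1 (.app e1 e2) xs ((C1.comp C2).comp (.call r x1 [x2] .hole)) r (S3 \ {r})
  | constr {S1 S2 c es xs C ys z} :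
      z ∈ S1 →
      AnfRelList (S1 \ {z}) es xs C ys S2 →
      AnfRel S1 (.constr c es) xs (C.comp (.constr z c ys .hole)) z S2
  | slet {S1 S2 S3 e1 e2 xs C1 C2 x1 x2} :
      AnfRel S1 e1 xs C1 x1 S2 →
      AnfRel S2 e2 (x1 :: xs) C2 x2 S3 →
      AnfRel S1 (.slet e1 e2) xs (C1.comp C2) x2 S3
  | smatch {S1 S2 S3 e bs bs' xs C1 y jp d r} :
      AnfRel S1 e xs C1 y S2 →
      jp ∈ S2 → d ∈ S2 \ {jp} →
      AnfRelBranches (S2 \ {jp, d}) bs xs bs' S3 →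
      r ∈ S3 →
      AnfRel S1 (.smatch e bs) xs
        ((C1.comp (.fn jp [d] (.ccase d bs') .hole)).comp (.call r jp [y] .hole))
        r (S3 \ {r})

/-- Left-to-right translation of a list of arguments, threading the name set. -/
inductive AnfRelList : Set Var → List SExp → List Var → Ctx → List Var → Set Var → Prop where
  | nil {S xs} : AnfRelList S [] xs .hole [] S
  | cons {S1 S2 S3 e es xs C1 C2 y ys} :
      AnfRel S1 e xs C1 y S2 →
      AnfRelList S2 es xs C2 ys S3 →
      AnfRelList S1 (e :: es) xs (C1.comp C2) (y :: ys) S3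

/-- Translation of match branches. -/
inductive AnfRelBranches : Set Var → List (CTag × SExp) → List Var →
    List (CTag × TExp) → Set Var → Prop where
  | nil {S xs} : AnfRelBranches S [] xs [] S
  | cons {S1 S2 S3 c e es xs C r bs'} :
      AnfRel S1 e xs C r S2 →
      AnfRelBranches S2 es xs bs' S3 →
      AnfRelBranches S1 ((c, e) :: es) xs ((c, C.plug (.halt r)) :: bs') S3
end

/-! ## The ANF value translation relation -/

inductive AnfValRel : SVal → TVal → Prop where
  | constr {c vs vs'} :
      vs.length = vs'.length →
      (∀ (i : ℕ) v v', vs[i]? = some v → vs'[i]? = some v' → AnfValRel v v') →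
      AnfValRel (.constr c vs) (.constr c vs')
  | clo {ρ e σ f x1 C1 r1} {S S' : Set Var} {xs : List Var} :
      (∀ x ∈ xs, x ∉ S ∪ {x1, f}) →
      AnfRel S e (x1 :: xs) C1 r1 S' →
      xs.length = ρ.length →
      (∀ (i : ℕ) x, xs[i]? = some x → (σ x).isSome) →
      (∀ (i : ℕ) x v v', xs[i]? = some x → ρ[i]? = some v → σ x = some v' → AnfValRel v v') →
      AnfValRel (.clo ρ e) (.clo σ f [x1] (C1.plug (.halt r1)))

/-- `anf_env_rel(x⃗, ρ, σ)`. -/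
def AnfEnvRel (xs : List Var) (ρ : List SVal) (σ : TEnv) : Prop :=
  xs.length = ρ.length ∧
  ∀ (i : ℕ) x v, xs[i]? = some x → ρ[i]? = some v →
    ∃ v', σ x = some v' ∧ AnfValRel v v'

/-! ## The observation relation -/

inductive ObsRel : SVal → TVal → Prop where
  | constr {c vs vs'} :
      vs.length = vs'.length →
      (∀ (i : ℕ) v v', vs[i]? = some v → vs'[i]? = some v' → ObsRel v v') →
      ObsRel (.constr c vs) (.constr c vs')
  | clo {ρ e σ f xs e'} : ObsRel (.clo ρ e) (.clo σ f xs e')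

lemma upd_self (σ : TEnv) (x : Var) (v : TVal) : upd σ x v x = some v := by simp [upd]

lemma upd_of_ne (σ : TEnv) {x y : Var} (v : TVal) (h : y ≠ x) : upd σ x v y = σ y := by
  simp [upd, h]

lemma upd_eqOn_compl {S : Set Var} {x : Var} (σ : TEnv) (v : TVal) (hx : x ∈ S) :
    Set.EqOn (upd σ x v) σ Sᶜ :=
  fun _ hy => upd_of_ne σ v fun h => hy (h ▸ hx)

lemma _root_.Set.EqOn.trans_compl_of_subset {α β : Type*} {f g h : α → β} {s t : Set α}
    (hfg : Set.EqOn f g tᶜ) (hgh : Set.EqOn g h sᶜ) (hts : t ⊆ s) : Set.EqOn f h sᶜ :=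
  (hfg.mono (Set.compl_subset_compl.2 hts)).trans hgh

lemma getList_cons_of_eq_some {σ : TEnv} {x : Var} {xs : List Var} {w : TVal}
    {ws : List TVal} (hx : σ x = some w) (hxs : getList σ xs = some ws) :
    getList σ (x :: xs) = some (w :: ws) := by
  unfold getList at hxs ⊢
  simp [List.mapM_cons, hx, hxs]

lemma _root_.List.Forall₂.rel_of_getElem? {α β : Type*} {R : α → β → Prop} {l₁ : List α}
    {l₂ : List β} (h : List.Forall₂ R l₁ l₂) {i : ℕ} {a : α} {b : β} (ha : l₁[i]? = some a)
    (hb : l₂[i]? = some b) : R a b := by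
  induction h generalizing i with
  | nil => simp at ha
  | cons hab _ ih =>
    cases i with
    | zero =>
      simp only [List.getElem?_cons_zero, Option.some.injEq] at ha hb
      exact ha ▸ hb ▸ hab
    | succ i => exact ih (by simpa using ha) (by simpa using hb)

lemma Ctx.plug_comp (C D : Ctx) (e : TExp) : (C.comp D).plug e = C.plug (D.plug e) := by
  induction C <;> simp [Ctx.comp, Ctx.plug, *]

def Ctx.Reaches (C : Ctx) (σ σ' : TEnv) : Prop :=
  ∀ ⦃e f r⦄, TEval σ' e f r → ∃ f', TEval σ (C.plug e) f' r

lemma Ctx.reaches_hole (σ : TEnv) : Ctx.hole.Reaches σ σ :=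
  fun _ f _ h => ⟨f, h⟩

lemma Ctx.Reaches.comp {C D : Ctx} {σ₁ σ₂ σ₃ : TEnv} (hC : C.Reaches σ₁ σ₂)
    (hD : D.Reaches σ₂ σ₃) : (C.comp D).Reaches σ₁ σ₃ := by
  intro e f r h
  obtain ⟨f₂, h₂⟩ := hD h
  rw [Ctx.plug_comp]
  exact hC h₂

lemma Ctx.Reaches.eval_halt {C : Ctx} {σ σ' : TEnv} {x : Var} {v : TVal}
    (hC : C.Reaches σ σ') (hx : σ' x = some v) : ∃ f, TEval σ (C.plug (.halt x)) f (.val v) :=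
  hC (TEval.halt hx)

lemma Ctx.reaches_constr {σ : TEnv} {x : Var} {c : CTag} {ys : List Var} {vs : List TVal}
    (hys : getList σ ys = some vs) :
    (Ctx.constr x c ys .hole).Reaches σ (upd σ x (.constr c vs)) :=
  fun _ _ _ h => ⟨_, TEval.constr hys h⟩

lemma Ctx.reaches_fn (σ : TEnv) (f : Var) (xs : List Var) (eb : TExp) :
    (Ctx.fn f xs eb .hole).Reaches σ (upd σ f (.clo σ f xs eb)) :=
  fun _ _ _ h => ⟨_, TEval.fn h⟩

lemma Ctx.reaches_call {σ σc : TEnv} {x g g' : Var} {xs ys : List Var} {eb : TExp}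
    {vs : List TVal} {fb : ℕ} {v : TVal} (hg : σ g = some (.clo σc g' xs eb))
    (hys : getList σ ys = some vs) (hlen : xs.length = vs.length)
    (hb : TEval (updList (upd σc g' (.clo σc g' xs eb)) xs vs) eb fb (.val v)) :
    (Ctx.call x g ys .hole).Reaches σ (upd σ x v) :=
  fun _ _ _ h => ⟨_, TEval.call hg hys hlen hb h⟩

mutual
theorem AnfRel.subset {S S' : Set Var} {e : SExp} {xs : List Var} {C : Ctx} {r : Var} :
    AnfRel S e xs C r S' → S' ⊆ S
  | .var _ => subset_rfl
  | .lam _ _ h => h.subset.trans Set.sdiff_subset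
  | .app h₁ h₂ _ => Set.sdiff_subset.trans (h₂.subset.trans h₁.subset)
  | .constr _ h => h.subset.trans Set.sdiff_subset
  | .slet h₁ h₂ => h₂.subset.trans h₁.subset
  | .smatch h _ _ hbs _ =>
    Set.sdiff_subset.trans (hbs.subset.trans (Set.sdiff_subset.trans h.subset))

theorem AnfRelList.subset {S S' : Set Var} {es : List SExp} {xs : List Var} {C : Ctx}
    {ys : List Var} : AnfRelList S es xs C ys S' → S' ⊆ S
  | .nil => subset_rfl
  | .cons h₁ h₂ => h₂.subset.trans h₁.subset

theorem AnfRelBranches.subset {S S' : Set Var} {bs : List (CTag × SExp)} {xs : List Var}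
    {bs' : List (CTag × TExp)} : AnfRelBranches S bs xs bs' S' → S' ⊆ S
  | .nil => subset_rfl
  | .cons h₁ h₂ => h₂.subset.trans h₁.subset
end

theorem AnfRel.not_mem_cons {S S' : Set Var} {e : SExp} {xs : List Var} {C : Ctx} {r : Var}
    (h : AnfRel S e xs C r S') (hxs : ∀ x ∈ xs, x ∉ S) : ∀ x ∈ r :: xs, x ∉ S' := by
  refine List.forall_mem_cons.2 ⟨?_, fun x hx hx' => hxs x hx (h.subset hx')⟩
  match h with
  | .var hy => exact fun hr => hxs r (List.mem_of_getElem? hy) hr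
  | .lam _ _ hb => exact fun hr => (hb.subset hr).2 (by simp)
  | .app _ _ _ => exact fun hr => hr.2 rfl
  | .constr _ hl => exact fun hr => (hl.subset hr).2 rfl
  | .slet h₁ h₂ => exact h₂.not_mem_cons (h₁.not_mem_cons hxs) _ List.mem_cons_self
  | .smatch _ _ _ _ _ => exact fun hr => hr.2 rfl

theorem AnfRelBranches.exists_of_lookup {S S' : Set Var} {bs : List (CTag × SExp)}
    {xs : List Var} {bs' : List (CTag × TExp)} (h : AnfRelBranches S bs xs bs' S') {c : CTag}
    {e : SExp} (hc : bs.lookup c = some e) :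
    ∃ (T T' : Set Var) (C : Ctx) (r : Var),
      T ⊆ S ∧ AnfRel T e xs C r T' ∧ bs'.lookup c = some (C.plug (.halt r)) := by
  match h with
  | .nil => simp at hc
  | .cons (c := c₀) h₁ h₂ =>
    by_cases hc₀ : c = c₀
    · subst hc₀
      simp only [List.lookup_cons_self, Option.some.injEq] at hc ⊢
      exact ⟨_, _, _, _, subset_rfl, hc ▸ h₁, rfl⟩
    · have hne : (c == c₀) = false := beq_false_of_ne hc₀
      simp only [List.lookup, hne] at hc ⊢
      obtain ⟨T, T', C, r, hT, hA, hlookup⟩ := h₂.exists_of_lookup hc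
      exact ⟨T, T', C, r, hT.trans h₁.subset, hA, hlookup⟩

/-- Unlike `AnfValRel`, the closure case records the whole translation of `λ.e`, including the
freshness of the parameter name, which the simulation of the body needs. -/
inductive SimVal : SVal → TVal → Prop where
  | constr {c vs vs'} :
      vs.length = vs'.length →
      (∀ (i : ℕ) v v', vs[i]? = some v → vs'[i]? = some v' → SimVal v v') →
      SimVal (.constr c vs) (.constr c vs')
  | clo {ρ e σc f x₁ eb} {S S' : Set Var} {xs : List Var} :
      AnfRel S (.lam e) xs (.fn f [x₁] eb .hole) f S' →
      (∀ x ∈ xs, x ∉ S) →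
      xs.length = ρ.length →
      (∀ x ∈ xs, (σc x).isSome) →
      (∀ (i : ℕ) x v v', xs[i]? = some x → ρ[i]? = some v → σc x = some v' → SimVal v v') →
      SimVal (.clo ρ e) (.clo σc f [x₁] eb)

theorem SimVal.obsRel {v : SVal} {w : TVal} (h : SimVal v w) : ObsRel v w := by
  induction h with
  | constr hlen _ ih => exact .constr hlen ih
  | clo => exact .clo

/-- The clauses of `SimVal.clo`. They avoid `∃ v', σ x = some v' ∧ SimVal v v'`, which would make
`SimVal` a nested inductive that the kernel rejects. -/
def SimEnv (xs : List Var) (ρ : List SVal) (σ : TEnv) : Prop :=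
  xs.length = ρ.length ∧ (∀ x ∈ xs, (σ x).isSome) ∧
    ∀ (i : ℕ) x v v', xs[i]? = some x → ρ[i]? = some v → σ x = some v' → SimVal v v'

theorem SimEnv.nil (σ : TEnv) : SimEnv [] [] σ :=
  ⟨rfl, by simp, by simp⟩

theorem SimEnv.lookup {xs : List Var} {ρ : List SVal} {σ : TEnv} (h : SimEnv xs ρ σ) {i : ℕ}
    {x : Var} {v : SVal} (hx : xs[i]? = some x) (hv : ρ[i]? = some v) :
    ∃ w, σ x = some w ∧ SimVal v w := by
  obtain ⟨w, hw⟩ := Option.isSome_iff_exists.1 (h.2.1 x (List.mem_of_getElem? hx))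
  exact ⟨w, hw, h.2.2 i x v w hx hv hw⟩

theorem SimEnv.cons {xs : List Var} {ρ : List SVal} {σ : TEnv} (h : SimEnv xs ρ σ) {x : Var}
    {v : SVal} {w : TVal} (hx : σ x = some w) (hvw : SimVal v w) :
    SimEnv (x :: xs) (v :: ρ) σ := by
  refine ⟨by simp [h.1], List.forall_mem_cons.2 ⟨by simp [hx], h.2.1⟩, ?_⟩
  rintro (_ | i) y u u' hy hu hu'
  · simp only [List.getElem?_cons_zero, Option.some.injEq] at hy hu
    subst hy hu
    exact Option.some.inj (hx.symm.trans hu') ▸ hvw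
  · exact h.2.2 i y u u' (by simpa using hy) (by simpa using hu) hu'

theorem SimEnv.of_eqOn {xs : List Var} {ρ : List SVal} {σ σ' : TEnv} {S : Set Var}
    (h : SimEnv xs ρ σ) (hσ : Set.EqOn σ' σ Sᶜ) (hxs : ∀ x ∈ xs, x ∉ S) : SimEnv xs ρ σ' := by
  have hagree : ∀ x ∈ xs, σ' x = σ x := fun x hx => hσ (hxs x hx)
  refine ⟨h.1, fun x hx => hagree x hx ▸ h.2.1 x hx, fun i x v v' hx hv hv' => ?_⟩
  exact h.2.2 i x v v' hx hv ((hagree x (List.mem_of_getElem? hx)).symm.trans hv')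

def Simulates (ρ : List SVal) (e : SExp) (v : SVal) : Prop :=
  ∀ ⦃S : Set Var⦄ ⦃xs : List Var⦄ ⦃C : Ctx⦄ ⦃r : Var⦄ ⦃S' : Set Var⦄ ⦃σ : TEnv⦄,
    AnfRel S e xs C r S' → (∀ x ∈ xs, x ∉ S) → SimEnv xs ρ σ →
    ∃ σ' v', SimVal v v' ∧ σ' r = some v' ∧ Set.EqOn σ' σ Sᶜ ∧ C.Reaches σ σ'

def SimulatesList (ρ : List SVal) (es : List SExp) (vs : List SVal) : Prop :=
  ∀ ⦃S : Set Var⦄ ⦃xs : List Var⦄ ⦃C : Ctx⦄ ⦃ys : List Var⦄ ⦃S' : Set Var⦄ ⦃σ : TEnv⦄,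
    AnfRelList S es xs C ys S' → (∀ x ∈ xs, x ∉ S) → SimEnv xs ρ σ →
    ∃ σ' vs', List.Forall₂ SimVal vs vs' ∧ getList σ' ys = some vs' ∧ Set.EqOn σ' σ Sᶜ ∧
      C.Reaches σ σ'

section Simulates

variable {ρ : List SVal} {e e₁ e₂ : SExp} {v v₁ v₂ : SVal}

theorem Simulates.var {n : ℕ} (h : ρ[n]? = some v) : Simulates ρ (.var n) v := by
  intro S xs C r S' σ hA _ henv
  cases hA with
  | var hy =>
    obtain ⟨w, hw, hvw⟩ := henv.lookup hy h
    exact ⟨σ, w, hvw, hw, Set.eqOn_refl σ _, Ctx.reaches_hole σ⟩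

theorem Simulates.lam : Simulates ρ (.lam e) (.clo ρ e) := by
  intro S xs C r S' σ hA hxs henv
  cases hA with
  | lam hx₁ hf hb =>
    exact ⟨_, _, .clo (.lam hx₁ hf hb) hxs henv.1 henv.2.1 henv.2.2, upd_self _ _ _,
      upd_eqOn_compl σ _ hf.1, Ctx.reaches_fn σ _ _ _⟩

theorem Simulates.slet (h₁ : Simulates ρ e₁ v₁) (h₂ : Simulates (v₁ :: ρ) e₂ v) :
    Simulates ρ (.slet e₁ e₂) v := by
  intro S xs C r S' σ hA hxs henv
  cases hA with
  | slet hA₁ hA₂ =>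
    obtain ⟨σ₁, w₁, hw₁, hx₁, hσ₁, hC₁⟩ := h₁ hA₁ hxs henv
    obtain ⟨σ₂, w₂, hw₂, hx₂, hσ₂, hC₂⟩ :=
      h₂ hA₂ (hA₁.not_mem_cons hxs) ((henv.of_eqOn hσ₁ hxs).cons hx₁ hw₁)
    exact ⟨σ₂, w₂, hw₂, hx₂, hσ₂.trans_compl_of_subset hσ₁ hA₁.subset,
      hC₁.comp hC₂⟩

theorem Simulates.app {ρc : List SVal} {eb : SExp} (h₁ : Simulates ρ e₁ (.clo ρc eb))
    (h₂ : Simulates ρ e₂ v₂) (h₃ : Simulates (v₂ :: ρc) eb v) :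
    Simulates ρ (.app e₁ e₂) v := by
  intro S xs C r S' σ hA hxs henv
  cases hA with
  | app hA₁ hA₂ hr =>
    obtain ⟨σ₁, w₁, hw₁, hx₁, hσ₁, hC₁⟩ := h₁ hA₁ hxs henv
    obtain ⟨hx₁S, hxsS⟩ := List.forall_mem_cons.1 (hA₁.not_mem_cons hxs)
    obtain ⟨σ₂, w₂, hw₂, hx₂, hσ₂, hC₂⟩ := h₂ hA₂ hxsS (henv.of_eqOn hσ₁ hxs)
    cases hw₁ with
    | clo hlam hxsc hlen hdef hrel =>
      cases hlam with
      | lam hy hf hb =>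
        rename_i σc fc y Sc _ xsc Cb rb
        set clo := TVal.clo σc fc [y] (Cb.plug (.halt rb))
        have hbody : Set.EqOn (upd (upd σc fc clo) y w₂) σc Scᶜ :=
          (upd_eqOn_compl _ w₂ hy).trans (upd_eqOn_compl _ _ hf.1)
        have hxsb : ∀ x ∈ y :: xsc, x ∉ Sc \ {y, fc} :=
          List.forall_mem_cons.2 ⟨fun h => h.2 (by simp), fun x hx h => hxsc x hx h.1⟩
        obtain ⟨σ₃, v', hv', hr₁, -, hC₃⟩ := h₃ hb hxsb
          ((SimEnv.of_eqOn ⟨hlen, hdef, hrel⟩ hbody hxsc).cons (upd_self _ _ _) hw₂)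
        obtain ⟨fb, hfb⟩ := hC₃.eval_halt hr₁
        refine ⟨upd σ₂ r v', v', hv', upd_self _ _ _, ?_, (hC₁.comp hC₂).comp ?_⟩
        · exact (upd_eqOn_compl _ _ (hA₁.subset (hA₂.subset hr))).trans
            (hσ₂.trans_compl_of_subset hσ₁ hA₁.subset)
        · exact Ctx.reaches_call ((hσ₂ hx₁S).trans hx₁) (getList_cons_of_eq_some hx₂ rfl) rfl
            hfb

theorem Simulates.constr {c : CTag} {es : List SExp} {vs : List SVal}
    (h : SimulatesList ρ es vs) : Simulates ρ (.constr c es) (.constr c vs) := by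
  intro S xs C r S' σ hA hxs henv
  cases hA with
  | constr hz hl =>
    obtain ⟨σ₁, ws, hws, hys, hσ₁, hC⟩ := h hl (fun x hx h => hxs x hx h.1) henv
    exact ⟨_, _, .constr hws.length_eq fun _ _ _ => hws.rel_of_getElem?, upd_self _ _ _,
      (upd_eqOn_compl _ _ hz).trans (hσ₁.mono (Set.compl_subset_compl.2 Set.sdiff_subset)),
      hC.comp (Ctx.reaches_constr hys)⟩

theorem Simulates.smatch {bs : List (CTag × SExp)} {c : CTag} {vs : List SVal}
    (h : Simulates ρ e (.constr c vs)) (hc : bs.lookup c = some e₁) (h₁ : Simulates ρ e₁ v) :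
    Simulates ρ (.smatch e bs) v := by
  intro S xs C r S' σ hA hxs henv
  cases hA with
  | smatch hA hjp hd hbs hr =>
    rename_i _ _ bs' _ y jp d
    obtain ⟨σ₁, w, hw, hy, hσ₁, hC⟩ := h hA hxs henv
    cases hw with
    | constr _ _ =>
      rename_i ws _ _
      obtain ⟨T, T', Cb, rb, hT, hAb, hc'⟩ := hbs.exists_of_lookup hc
      have hTS : T ⊆ S := hT.trans (Set.sdiff_subset.trans hA.subset)
      set σj := upd σ₁ jp (.clo σ₁ jp [d] (.ccase d bs'))
      have hσj : Set.EqOn σj σ Sᶜ := (upd_eqOn_compl _ _ (hA.subset hjp)).trans hσ₁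
      have hσb := (upd_eqOn_compl σj (.constr c ws) (hA.subset hd.1)).trans hσj
      obtain ⟨σ₂, v', hv', hrb, -, hCb⟩ :=
        h₁ hAb (fun x hx h => hxs x hx (hTS h)) (henv.of_eqOn hσb hxs)
      obtain ⟨fb, hfb⟩ := hCb.eval_halt hrb
      have hyjp : y ≠ jp := fun h => hA.not_mem_cons hxs y List.mem_cons_self (h ▸ hjp)
      have hyj : σj y = some (.constr c ws) := (upd_of_ne _ _ hyjp).trans hy
      refine ⟨upd σj r v', v', hv', upd_self _ _ _,
        (upd_eqOn_compl _ _ (hA.subset (hbs.subset hr).1)).trans hσj,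
        (hC.comp (Ctx.reaches_fn _ _ _ _)).comp ?_⟩
      exact Ctx.reaches_call (upd_self _ _ _) (getList_cons_of_eq_some hyj rfl) rfl
        (.ccase (upd_self _ _ _) hc' hfb)

theorem SimulatesList.nil : SimulatesList ρ [] [] := by
  intro S xs C ys S' σ hA _ _
  cases hA
  exact ⟨σ, [], .nil, rfl, Set.eqOn_refl σ _, Ctx.reaches_hole σ⟩

theorem SimulatesList.cons {es : List SExp} {vs : List SVal} (h : Simulates ρ e v)
    (hs : SimulatesList ρ es vs) : SimulatesList ρ (e :: es) (v :: vs) := by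
  intro S xs C ys S' σ hA hxs henv
  cases hA with
  | cons hA₁ hA₂ =>
    obtain ⟨σ₁, w, hw, hy, hσ₁, hC₁⟩ := h hA₁ hxs henv
    obtain ⟨hyS, hxsS⟩ := List.forall_mem_cons.1 (hA₁.not_mem_cons hxs)
    obtain ⟨σ₂, ws, hws, hys, hσ₂, hC₂⟩ := hs hA₂ hxsS (henv.of_eqOn hσ₁ hxs)
    exact ⟨σ₂, w :: ws, .cons hw hws, getList_cons_of_eq_some ((hσ₂ hyS).trans hy) hys,
      hσ₂.trans_compl_of_subset hσ₁ hA₁.subset, hC₁.comp hC₂⟩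

end Simulates

-- The result stays a variable so that the recursion is structural on the derivation.
mutual
theorem SEval.simulates_of_eq {ρ : List SVal} {e : SExp} {f : ℕ} {r : SRes} :
    SEval ρ e f r → ∀ {v}, r = .val v → Simulates ρ e v
  | .var h, _, rfl => .var h
  | .lam, _, rfl => .lam
  | .slet h₁ h₂, _, rfl => .slet (h₁.simulates_of_eq rfl) (h₂.simulates_of_eq rfl)
  | .app h₁ h₂ h₃, _, rfl =>
    .app (h₁.simulates_of_eq rfl) (h₂.simulates_of_eq rfl) (h₃.simulates_of_eq rfl)
  | .constr h, _, rfl => .constr (h.simulates_of_eq rfl)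
  | .smatch h₁ hc h₂, _, rfl => .smatch (h₁.simulates_of_eq rfl) hc (h₂.simulates_of_eq rfl)
  | .oot, _, h | .slet_oot _, _, h | .app_oot1 _, _, h | .app_oot2 _ _, _, h
  | .constr_oot _, _, h | .smatch_oot _, _, h => nomatch h

theorem SEvalList.simulates_of_eq {ρ : List SVal} {es : List SExp} {f : ℕ}
    {r : Option (List SVal)} : SEvalList ρ es f r → ∀ {vs}, r = some vs → SimulatesList ρ es vs
  | .nil, _, rfl => .nil
  | .cons h₁ h₂, _, rfl => .cons (h₁.simulates_of_eq rfl) (h₂.simulates_of_eq rfl)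
  | .cons_oot _, _, h | .cons_oot2 _ _, _, h => nomatch h
end

def Translatable (xs : List Var) (e : SExp) : Prop :=
  ∀ ⦃S : Set Var⦄, S.Infinite → ∃ C r S', AnfRel S e xs C r S' ∧ S'.Infinite

theorem AnfRelList.exists_of_translatable {xs : List Var} {es : List SExp}
    (h : ∀ e ∈ es, Translatable xs e) {S : Set Var} (hS : S.Infinite) :
    ∃ C ys S', AnfRelList S es xs C ys S' ∧ S'.Infinite := by
  induction es generalizing S with
  | nil => exact ⟨_, _, _, .nil, hS⟩
  | cons e es ih =>
    obtain ⟨C₁, y, S₂, h₁, hS₂⟩ := h e List.mem_cons_self hS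
    obtain ⟨C₂, ys, S₃, h₂, hS₃⟩ := ih (fun e he => h e (List.mem_cons_of_mem _ he)) hS₂
    exact ⟨_, _, _, .cons h₁ h₂, hS₃⟩

theorem AnfRelBranches.exists_of_translatable {xs : List Var} {bs : List (CTag × SExp)}
    (h : ∀ b ∈ bs, Translatable xs b.2) {S : Set Var} (hS : S.Infinite) :
    ∃ bs' S', AnfRelBranches S bs xs bs' S' ∧ S'.Infinite := by
  induction bs generalizing S with
  | nil => exact ⟨_, _, .nil, hS⟩
  | cons b bs ih =>
    obtain ⟨C, r, S₂, h₁, hS₂⟩ := h b List.mem_cons_self hS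
    obtain ⟨bs', S₃, h₂, hS₃⟩ := ih (fun b hb => h b (List.mem_cons_of_mem _ hb)) hS₂
    exact ⟨_, _, .cons h₁ h₂, hS₃⟩

theorem SWf.translatable {n : ℕ} {e : SExp} (hwf : SWf n e) {xs : List Var}
    (hxs : xs.length = n) : Translatable xs e := by
  induction hwf generalizing xs with
  | var hm =>
    exact fun S hS => ⟨_, _, _, .var (List.getElem?_eq_getElem (hxs ▸ hm)), hS⟩
  | slet _ _ ih₁ ih₂ =>
    intro S hS
    obtain ⟨C₁, x₁, S₂, h₁, hS₂⟩ := ih₁ hxs hS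
    obtain ⟨C₂, x₂, S₃, h₂, hS₃⟩ := ih₂ (xs := x₁ :: xs) (by simp [hxs]) hS₂
    exact ⟨_, _, _, .slet h₁ h₂, hS₃⟩
  | lam _ ih =>
    intro S hS
    obtain ⟨x₁, hx₁⟩ := hS.nonempty
    obtain ⟨f, hf⟩ := (hS.sdiff (Set.finite_singleton x₁)).nonempty
    obtain ⟨C, r, S', hb, hS'⟩ :=
      ih (xs := x₁ :: xs) (by simp [hxs]) (hS.sdiff (Set.toFinite {x₁, f}))
    exact ⟨_, _, _, .lam hx₁ hf hb, hS'⟩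
  | app _ _ ih₁ ih₂ =>
    intro S hS
    obtain ⟨C₁, x₁, S₂, h₁, hS₂⟩ := ih₁ hxs hS
    obtain ⟨C₂, x₂, S₃, h₂, hS₃⟩ := ih₂ hxs hS₂
    obtain ⟨r, hr⟩ := hS₃.nonempty
    exact ⟨_, _, _, .app h₁ h₂ hr, hS₃.sdiff (Set.finite_singleton r)⟩
  | constr _ ih =>
    intro S hS
    obtain ⟨z, hz⟩ := hS.nonempty
    obtain ⟨C, ys, S', hl, hS'⟩ :=
      AnfRelList.exists_of_translatable (fun e he => ih e he hxs)
        (hS.sdiff (Set.finite_singleton z))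
    exact ⟨_, _, _, .constr hz hl, hS'⟩
  | smatch _ _ ih ihs =>
    intro S hS
    obtain ⟨C, y, S₂, h, hS₂⟩ := ih hxs hS
    obtain ⟨jp, hjp⟩ := hS₂.nonempty
    obtain ⟨d, hd⟩ := (hS₂.sdiff (Set.finite_singleton jp)).nonempty
    obtain ⟨bs', S₃, hbs, hS₃⟩ :=
      AnfRelBranches.exists_of_translatable (fun b hb => ihs b hb hxs)
        (hS₂.sdiff (Set.toFinite {jp, d}))
    obtain ⟨r, hr⟩ := hS₃.nonempty
    exact ⟨_, _, _, .smatch h hjp hd hbs hr, hS₃.sdiff (Set.finite_singleton r)⟩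

/-- **Whole-Program ANF Correctness.** -/
theorem anf_whole_program
    (e : SExp) (hwf : SWf 0 e) (S : Set Var) (hS : S.Infinite) :
    ∃ (C : Ctx) (x : Var) (S' : Set Var),
      AnfRel S e [] C x S' ∧
      ∀ v : SVal, (∃ f, SEval [] e f (.val v)) →
        ∃ v' : TVal,
          (∃ f, TEval (fun _ => none) (C.plug (.halt x)) f (.val v')) ∧
          ObsRel v v' := by
  obtain ⟨C, x, S', hA, -⟩ := hwf.translatable (xs := []) rfl hS
  refine ⟨C, x, S', hA, fun v ⟨_, hev⟩ => ?_⟩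
  obtain ⟨σ', v', hv', hx, -, hC⟩ := hev.simulates_of_eq rfl hA (by simp) (SimEnv.nil _)
  exact ⟨v', hC.eval_halt hx, hv'.obsRel⟩

end ANF
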